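/- arXiv:1203.6386 — 4 statements merged into one kernel-verified Lean document; each statement's English description precedes it below -/
import Mathlib

section
/- Let q ≡ 3 (mod 4) be a prime power, H = SL(2,q), and Δ the set of orbits of the group of nonzero-square scalar matrices on F_q² \ {0}. Then the stabilizer in H of the point [1,0] ∈ Δ is the group of lower-triangular matrices with diagonal entries (x², x⁻²) for x ∈ F_q nonzero, and this stabilizer has exactly 4 orbits on Δ, of sizes 1, 1, q, and q. -/
/-! Write `[v]` for `sqOrbit F v`. An element of `SL(2,F)` fixes `[1,0]` iff its first row is
`x² (1,0)` for some `x ≠ 0`, and then the determinant forces the diagonal `(x², x⁻²)`. Such a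
matrix sends `(a,b)` to `(a x² + b y, b x⁻²)`: for `b = 0` the class `[a,0]` is fixed, while for
`b ≠ 0` the first coordinate becomes arbitrary and the second stays in the square class of `b`.
When `q ≡ 3 (mod 4)`, `-1` is a nonsquare, so every nonzero element is `±` a square; this leaves
the four orbits `{[1,0]}`, `{[-1,0]}`, `{[c,1]}`, `{[c,-1]}`, and the last two have `q` elements
because `c ↦ [c,±1]` is injective. -/

open Matrix

section SqOrbit

variable {F M N : Type*} [Field F] [AddCommGroup M] [Module F M] [AddCommGroup N] [Module F N]

variable (F) in
def sqOrbit (v : M) : Set M := {w | ∃ x : F, x ≠ 0 ∧ x ^ 2 • v = w}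

theorem mem_sqOrbit_self (v : M) : v ∈ sqOrbit F v := ⟨1, one_ne_zero, by simp⟩

theorem sqOrbit_sq_smul {x : F} (hx : x ≠ 0) (v : M) : sqOrbit F (x ^ 2 • v) = sqOrbit F v := by
  ext w
  constructor
  · rintro ⟨z, hz, rfl⟩
    exact ⟨z * x, mul_ne_zero hz hx, by rw [mul_pow, mul_smul]⟩
  · rintro ⟨z, hz, rfl⟩
    refine ⟨z / x, div_ne_zero hz hx, ?_⟩
    rw [smul_smul, ← mul_pow, div_mul_cancel₀ _ hx]

theorem sqOrbit_eq_sqOrbit_iff {v w : M} :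
    sqOrbit F v = sqOrbit F w ↔ ∃ x : F, x ≠ 0 ∧ x ^ 2 • v = w := by
  refine ⟨fun h => (h ▸ mem_sqOrbit_self w : w ∈ sqOrbit F v), ?_⟩
  rintro ⟨x, hx, rfl⟩
  exact (sqOrbit_sq_smul hx v).symm

theorem LinearMap.image_sqOrbit (f : M →ₗ[F] N) (v : M) : f '' sqOrbit F v = sqOrbit F (f v) := by
  ext w
  constructor
  · rintro ⟨u, ⟨x, hx, rfl⟩, rfl⟩
    exact ⟨x, hx, (f.map_smul _ _).symm⟩
  · rintro ⟨x, hx, rfl⟩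
    exact ⟨x ^ 2 • v, ⟨x, hx, rfl⟩, f.map_smul _ _⟩

end SqOrbit

theorem exists_eq_sq_mul_of_ne_zero {F : Type*} [Field F]
    (hF : ∀ a : F, IsSquare a ∨ IsSquare (-a)) {a : F} (ha : a ≠ 0) :
    ∃ s ε : F, s ≠ 0 ∧ (ε = 1 ∨ ε = -1) ∧ a = s ^ 2 * ε := by
  rcases hF a with ⟨s, hs⟩ | ⟨s, hs⟩
  · exact ⟨s, 1, by rintro rfl; simp_all, Or.inl rfl, by rw [hs, sq, mul_one]⟩
  · exact ⟨s, -1, by rintro rfl; simp_all, Or.inr rfl, by rw [sq, ← hs]; ring⟩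

theorem FiniteField.isSquare_or_isSquare_neg {F : Type*} [Field F] [Fintype F]
    (h : ¬IsSquare (-1 : F)) (a : F) : IsSquare a ∨ IsSquare (-a) := by
  classical
  by_contra! ha
  have ha₀ : -a ≠ 0 := by rintro h0; exact ha.2 (h0 ▸ IsSquare.zero)
  refine ha.2 ((quadraticChar_one_iff_isSquare ha₀).1 ?_)
  rw [neg_eq_neg_one_mul, map_mul, quadraticChar_neg_one_iff_not_isSquare.2 h,
    quadraticChar_neg_one_iff_not_isSquare.2 ha.1]
  norm_num

section LowerSqDiag

variable {F : Type*} [Field F]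

variable (F) in
def lowerSqDiag : Set (SpecialLinearGroup (Fin 2) F) :=
  {g | ∃ x y : F, x ≠ 0 ∧ (g : Matrix (Fin 2) (Fin 2) F) = !![x ^ 2, 0; y, (x ^ 2)⁻¹]}

theorem sqOrbit_vecMul_eq_sqOrbit_one_zero_iff (g : SpecialLinearGroup (Fin 2) F) :
    sqOrbit F (![1, 0] ᵥ* (g : Matrix (Fin 2) (Fin 2) F)) = sqOrbit F ![1, 0] ↔
      g ∈ lowerSqDiag F := by
  have hdet := g.det_coe
  simp only [lowerSqDiag, Set.mem_ofPred_eq]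
  generalize (g : Matrix (Fin 2) (Fin 2) F) = M at hdet ⊢
  rw [eq_comm, sqOrbit_eq_sqOrbit_iff, eta_fin_two M]
  rw [eta_fin_two M, det_fin_two_of] at hdet
  simp only [ne_eq, smul_cons, smul_eq_mul, mul_one, mul_zero, smul_empty, vecMul_cons, head_cons,
    one_smul, tail_cons, zero_smul, empty_vecMul, add_zero, vecCons_inj, and_true,
    EmbeddingLike.apply_eq_iff_eq, exists_and_left, existsAndEq, true_and]
  refine exists_congr fun x => and_congr_right fun _ => ⟨fun ⟨h00, h01⟩ => ?_, fun h => ?_⟩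
  · rw [← h00, ← h01] at hdet
    exact ⟨⟨h00.symm, h01.symm⟩, eq_inv_of_mul_eq_one_right (by linear_combination hdet)⟩
  · exact ⟨h.1.1.symm, h.1.2.symm⟩

theorem exists_mem_lowerSqDiag {x : F} (hx : x ≠ 0) (y : F) :
    ∃ g ∈ lowerSqDiag F, (g : Matrix (Fin 2) (Fin 2) F) = !![x ^ 2, 0; y, (x ^ 2)⁻¹] :=
  ⟨⟨_, by simp [det_fin_two_of, hx]⟩, ⟨x, y, hx, rfl⟩, rfl⟩

def lowerSqDiagOrbit (v : Fin 2 → F) : Set (Set (Fin 2 → F)) :=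
  {U | ∃ g ∈ lowerSqDiag F, sqOrbit F (v ᵥ* (g : Matrix (Fin 2) (Fin 2) F)) = U}

theorem lowerSqDiagOrbit_eq (a b : F) : lowerSqDiagOrbit ![a, b] =
    {U | ∃ x y : F, x ≠ 0 ∧ sqOrbit F ![a * x ^ 2 + b * y, b * (x ^ 2)⁻¹] = U} := by
  ext U
  constructor
  · rintro ⟨g, ⟨x, y, hx, hg⟩, rfl⟩
    exact ⟨x, y, hx, by simp [hg, vecMul_cons]⟩
  · rintro ⟨x, y, hx, rfl⟩
    obtain ⟨g, hg, hgM⟩ := exists_mem_lowerSqDiag hx y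
    exact ⟨g, hg, by simp [hgM, vecMul_cons]⟩

theorem lowerSqDiagOrbit_snd_zero (a : F) : lowerSqDiagOrbit ![a, 0] = {sqOrbit F ![a, 0]} := by
  rw [lowerSqDiagOrbit_eq]
  ext U
  constructor
  · rintro ⟨x, y, hx, rfl⟩
    rw [← sqOrbit_sq_smul hx ![a, 0]]
    simp [mul_comm]
  · rintro rfl
    exact ⟨1, 0, one_ne_zero, by simp⟩

theorem lowerSqDiagOrbit_of_snd_ne_zero (a : F) {b : F} (hb : b ≠ 0) :
    lowerSqDiagOrbit ![a, b] = Set.range fun c => sqOrbit F ![c, b] := by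
  rw [lowerSqDiagOrbit_eq]
  ext U
  constructor
  · rintro ⟨x, y, hx, rfl⟩
    refine ⟨(a * x ^ 2 + b * y) * x ^ 2, sqOrbit_eq_sqOrbit_iff.2 ⟨x⁻¹, inv_ne_zero hx, ?_⟩⟩
    ext i
    fin_cases i <;> simp <;> field_simp
  · rintro ⟨c, rfl⟩
    exact ⟨1, (c - a) / b, one_ne_zero, by field_simp; ring_nf⟩

end LowerSqDiag

section Classification

variable {F : Type*} [Field F]

theorem range_sqOrbit_snd_sq_mul {s : F} (hs : s ≠ 0) (e : F) :
    (Set.range fun c => sqOrbit F ![c, s ^ 2 * e]) = Set.range fun c => sqOrbit F ![c, e] := by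
  have hcomp : (fun c => sqOrbit F ![c, s ^ 2 * e]) =
      (fun c => sqOrbit F ![c, e]) ∘ fun c => c / s ^ 2 := by
    funext c
    rw [Function.comp_apply, ← sqOrbit_sq_smul hs ![c / s ^ 2, e]]
    simp [mul_div_cancel₀ _ (pow_ne_zero 2 hs)]
  rw [hcomp]
  exact (Equiv.divRight₀ _ (pow_ne_zero 2 hs)).surjective.range_comp _

theorem lowerSqDiagOrbit_mem (hF : ∀ a : F, IsSquare a ∨ IsSquare (-a)) {v : Fin 2 → F}
    (hv : v ≠ 0) :
    lowerSqDiagOrbit v ∈ ({{sqOrbit F ![1, 0]}, {sqOrbit F ![-1, 0]},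
      Set.range fun c => sqOrbit F ![c, 1], Set.range fun c => sqOrbit F ![c, -1]} :
        Set (Set (Set (Fin 2 → F)))) := by
  obtain ⟨a, b, rfl⟩ : ∃ a b : F, v = ![a, b] := ⟨v 0, v 1, by ext i; fin_cases i <;> rfl⟩
  by_cases hb : b = 0
  · subst hb
    have ha : a ≠ 0 := by rintro rfl; simp at hv
    obtain ⟨s, ε, hs, hε, rfl⟩ := exists_eq_sq_mul_of_ne_zero hF ha
    have hsq : sqOrbit F ![s ^ 2 * ε, 0] = sqOrbit F ![ε, 0] := by
      rw [← sqOrbit_sq_smul hs ![ε, 0]]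
      simp
    rw [lowerSqDiagOrbit_snd_zero, hsq]
    rcases hε with rfl | rfl <;> simp
  · obtain ⟨s, ε, hs, hε, rfl⟩ := exists_eq_sq_mul_of_ne_zero hF hb
    rw [lowerSqDiagOrbit_of_snd_ne_zero a hb, range_sqOrbit_snd_sq_mul hs]
    rcases hε with rfl | rfl <;> simp

theorem setOf_lowerSqDiagOrbit_eq (hF : ∀ a : F, IsSquare a ∨ IsSquare (-a)) :
    {T | ∃ v : Fin 2 → F, v ≠ 0 ∧ T = lowerSqDiagOrbit v} =
      {{sqOrbit F ![1, 0]}, {sqOrbit F ![-1, 0]},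
        Set.range fun c => sqOrbit F ![c, 1], Set.range fun c => sqOrbit F ![c, -1]} := by
  refine Set.Subset.antisymm (fun T ⟨v, hv, hT⟩ => hT ▸ lowerSqDiagOrbit_mem hF hv) ?_
  rintro T (rfl | rfl | rfl | rfl)
  · exact ⟨![1, 0], by simp, (lowerSqDiagOrbit_snd_zero 1).symm⟩
  · exact ⟨![-1, 0], by simp, (lowerSqDiagOrbit_snd_zero (-1)).symm⟩
  · exact ⟨![0, 1], by simp, (lowerSqDiagOrbit_of_snd_ne_zero 0 one_ne_zero).symm⟩
  · exact ⟨![0, -1], by simp,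
      (lowerSqDiagOrbit_of_snd_ne_zero 0 (neg_ne_zero.2 one_ne_zero)).symm⟩

theorem injective_sqOrbit_snd {e : F} (he : e ≠ 0) :
    Function.Injective fun c => sqOrbit F ![c, e] := by
  intro c c' h
  obtain ⟨x, -, hx⟩ := sqOrbit_eq_sqOrbit_iff.1 h
  simp only [smul_cons, smul_eq_mul, Matrix.smul_empty, vecCons_inj, and_true] at hx
  have hx1 : x ^ 2 = 1 := by simpa [he] using hx.2
  rw [← hx.1, hx1, one_mul]

end Classification

theorem SL2_stabilizer_of_point_and_orbits_general (F : Type*) [Field F] [Fintype F]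
    (hq : Fintype.card F % 4 = 3) :
    let O : (Fin 2 → F) → Set (Fin 2 → F) := fun v => {w | ∃ x : F, x ≠ 0 ∧ x ^ 2 • v = w}
    let Δ : Set (Set (Fin 2 → F)) := {S | ∃ v : Fin 2 → F, v ≠ 0 ∧ S = O v}
    let act : Matrix.SpecialLinearGroup (Fin 2) F → Set (Fin 2 → F) → Set (Fin 2 → F) :=
      fun g S => (fun v => Matrix.vecMul v (g : Matrix (Fin 2) (Fin 2) F)) '' S
    let Stab : Set (Matrix.SpecialLinearGroup (Fin 2) F) := {g | act g (O ![1, 0]) = O ![1, 0]}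
    (∀ g : Matrix.SpecialLinearGroup (Fin 2) F,
        g ∈ Stab ↔ ∃ x y : F, x ≠ 0 ∧
          (g : Matrix (Fin 2) (Fin 2) F) = !![x ^ 2, 0; y, (x ^ 2)⁻¹]) ∧
    ({T : Set (Set (Fin 2 → F)) | ∃ S ∈ Δ, T = {U | ∃ g ∈ Stab, act g S = U}} =
        {{O ![1, 0]}, {O ![-1, 0]}, {U | ∃ a : F, U = O ![a, 1]},
          {U | ∃ a : F, U = O ![a, -1]}}) ∧
    Set.ncard ({O ![1, 0]} : Set (Set (Fin 2 → F))) = 1 ∧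
    Set.ncard ({O ![-1, 0]} : Set (Set (Fin 2 → F))) = 1 ∧
    Set.ncard {U : Set (Fin 2 → F) | ∃ a : F, U = O ![a, 1]} = Fintype.card F ∧
    Set.ncard {U : Set (Fin 2 → F) | ∃ a : F, U = O ![a, -1]} = Fintype.card F := by
  intro O Δ act Stab
  have hact (g : SpecialLinearGroup (Fin 2) F) (v : Fin 2 → F) :
      act g (O v) = sqOrbit F (v ᵥ* (g : Matrix (Fin 2) (Fin 2) F)) :=
    (vecMulLinear (g : Matrix (Fin 2) (Fin 2) F)).image_sqOrbit v
  have hStab (g : SpecialLinearGroup (Fin 2) F) : g ∈ Stab ↔ g ∈ lowerSqDiag F :=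
    (Eq.congr_left (hact g _)).trans (sqOrbit_vecMul_eq_sqOrbit_one_zero_iff g)
  have horbits : {T | ∃ S ∈ Δ, T = {U | ∃ g ∈ Stab, act g S = U}} =
      {T | ∃ v : Fin 2 → F, v ≠ 0 ∧ T = lowerSqDiagOrbit v} := by
    simp only [lowerSqDiagOrbit, ← hact, hStab]
    ext T
    exact ⟨fun ⟨_, ⟨v, hv, hS⟩, hT⟩ => ⟨v, hv, hS ▸ hT⟩,
      fun ⟨v, hv, hT⟩ => ⟨O v, ⟨v, hv, rfl⟩, hT⟩⟩
  have hrange (e : F) : {U | ∃ a : F, U = O ![a, e]} = Set.range fun c => sqOrbit F ![c, e] :=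
    Set.ext fun _ => exists_congr fun _ => eq_comm
  have hF := FiniteField.isSquare_or_isSquare_neg (FiniteField.isSquare_neg_one_iff.not_left.2 hq)
  have hcard {e : F} (he : e ≠ 0) : {U | ∃ a : F, U = O ![a, e]}.ncard = Fintype.card F := by
    rw [hrange, Set.ncard_range_of_injective (injective_sqOrbit_snd he), Nat.card_eq_fintype_card]
  refine ⟨hStab, ?_, Set.ncard_singleton _, Set.ncard_singleton _, hcard one_ne_zero,
    hcard (neg_ne_zero.2 one_ne_zero)⟩
  rw [horbits, hrange, hrange]
  exact setOf_lowerSqDiagOrbit_eq hF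

/-- For `q ≡ 3 (mod 4)`, the stabilizer in `SL(2,q)` of the point `[1,0]` of `Δ` (the set
of orbits of nonzero-square scalars on nonzero row vectors) consists of the lower
triangular matrices with diagonal `(x², x⁻²)`, and this stabilizer has exactly four
orbits on `Δ`, of sizes `1`, `1`, `q` and `q`. -/
theorem SL2_stabilizer_of_point_and_orbits (F : Type*) [Field F] [Fintype F]
    [DecidableEq F] (hq : Fintype.card F % 4 = 3) :
    let O : (Fin 2 → F) → Set (Fin 2 → F) := fun v => {w | ∃ x : F, x ≠ 0 ∧ x ^ 2 • v = w}
    let Δ : Set (Set (Fin 2 → F)) := {S | ∃ v : Fin 2 → F, v ≠ 0 ∧ S = O v}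
    let act : Matrix.SpecialLinearGroup (Fin 2) F → Set (Fin 2 → F) → Set (Fin 2 → F) :=
      fun g S => (fun v => Matrix.vecMul v (g : Matrix (Fin 2) (Fin 2) F)) '' S
    let Stab : Set (Matrix.SpecialLinearGroup (Fin 2) F) := {g | act g (O ![1, 0]) = O ![1, 0]}
    (∀ g : Matrix.SpecialLinearGroup (Fin 2) F,
        g ∈ Stab ↔ ∃ x y : F, x ≠ 0 ∧
          (g : Matrix (Fin 2) (Fin 2) F) = !![x ^ 2, 0; y, (x ^ 2)⁻¹]) ∧
    ({T : Set (Set (Fin 2 → F)) | ∃ S ∈ Δ, T = {U | ∃ g ∈ Stab, act g S = U}} =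
        {{O ![1, 0]}, {O ![-1, 0]}, {U | ∃ a : F, U = O ![a, 1]},
          {U | ∃ a : F, U = O ![a, -1]}}) ∧
    Set.ncard ({O ![1, 0]} : Set (Set (Fin 2 → F))) = 1 ∧
    Set.ncard ({O ![-1, 0]} : Set (Set (Fin 2 → F))) = 1 ∧
    Set.ncard {U : Set (Fin 2 → F) | ∃ a : F, U = O ![a, 1]} = Fintype.card F ∧
    Set.ncard {U : Set (Fin 2 → F) | ∃ a : F, U = O ![a, -1]} = Fintype.card F :=
  SL2_stabilizer_of_point_and_orbits_general F hq
end

section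
/- Let q ≡ 3 (mod 4) be a prime power with q ≥ 7 and X_q the SL(2,q)-orbital digraph on Δ with arcs the H-images of ([1,0],[0,1]). Then the map Δ → Δ induced by the matrix o = [[0,1],[1,0]] (i.e., v ↦ v·o) is a digraph isomorphism from X_q to X_q^{opp}, the digraph with all arcs reversed. -/
/-- For `q ≡ 3 (mod 4)`, `q ≥ 7`, the map on `Δ` induced by the matrix `[[0,1],[1,0]]`
is an isomorphism from the orbital digraph `X_q` to the digraph `X_q^{opp}` with all
arcs reversed. -/
theorem Xq_iso_opp (F : Type*) [Field F] [Fintype F] [DecidableEq F]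
    (hq : Fintype.card F % 4 = 3) (hq7 : 7 ≤ Fintype.card F) :
    let O : (Fin 2 → F) → Set (Fin 2 → F) := fun v => {w | ∃ x : F, x ≠ 0 ∧ x ^ 2 • v = w}
    let Δ : Set (Set (Fin 2 → F)) := {S | ∃ v : Fin 2 → F, v ≠ 0 ∧ S = O v}
    let act : Matrix.SpecialLinearGroup (Fin 2) F → Set (Fin 2 → F) → Set (Fin 2 → F) :=
      fun g S => (fun v => Matrix.vecMul v (g : Matrix (Fin 2) (Fin 2) F)) '' S
    let Arc : Set (Fin 2 → F) → Set (Fin 2 → F) → Prop :=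
      fun S T => ∃ h : Matrix.SpecialLinearGroup (Fin 2) F,
        act h (O ![1, 0]) = S ∧ act h (O ![0, 1]) = T
    let Φ : Set (Fin 2 → F) → Set (Fin 2 → F) :=
      fun S => (fun v => Matrix.vecMul v (!![0, 1; 1, 0] : Matrix (Fin 2) (Fin 2) F)) '' S
    Set.BijOn Φ Δ Δ ∧ ∀ S ∈ Δ, ∀ T ∈ Δ, (Arc S T ↔ Arc (Φ T) (Φ S)) := by
  intro O Δ act Arc Φ
  have ho : ∀ S, Φ S = (fun v => Matrix.vecMul v (!![0, 1; 1, 0] : Matrix (Fin 2) (Fin 2) F)) '' S := fun _ => rfl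
  set o : Matrix (Fin 2) (Fin 2) F := !![0, 1; 1, 0] with ho_def
  have hoo : o * o = 1 := by
    ext i j
    fin_cases i <;> fin_cases j <;> simp [ho_def, Matrix.mul_apply, Fin.sum_univ_two]
  -- image of an orbit under right multiplication
  have himg : ∀ (v : Fin 2 → F) (M : Matrix (Fin 2) (Fin 2) F),
      (fun w => Matrix.vecMul w M) '' O v = O (Matrix.vecMul v M) := by
    intro v M
    ext w
    constructor
    · rintro ⟨u, ⟨x, hx, rfl⟩, rfl⟩
      exact ⟨x, hx, by simp [Matrix.smul_vecMul]⟩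
    · rintro ⟨x, hx, rfl⟩
      exact ⟨x ^ 2 • v, ⟨x, hx, rfl⟩, by simp [Matrix.smul_vecMul]⟩
  have hΦO : ∀ v : Fin 2 → F, Φ (O v) = O (Matrix.vecMul v o) := fun v => himg v o
  have hactO : ∀ (g : Matrix.SpecialLinearGroup (Fin 2) F) (v : Fin 2 → F),
      act g (O v) = O (Matrix.vecMul v (g : Matrix (Fin 2) (Fin 2) F)) := fun g v => himg v _
  have hΦΦ : ∀ S : Set (Fin 2 → F), Φ (Φ S) = S := by
    intro S
    rw [ho, ho, ← Set.image_comp]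
    have : ((fun v => Matrix.vecMul v o) ∘ fun v => Matrix.vecMul v o) = id := by
      funext v
      simp [Function.comp, Matrix.vecMul_vecMul, hoo]
    rw [this, Set.image_id]
  have hne : ∀ v : Fin 2 → F, v ≠ 0 → Matrix.vecMul v o ≠ 0 := by
    intro v hv h0
    apply hv
    have : Matrix.vecMul (Matrix.vecMul v o) o = Matrix.vecMul (0 : Fin 2 → F) o := by rw [h0]
    rwa [Matrix.vecMul_vecMul, hoo, Matrix.vecMul_one, Matrix.zero_vecMul] at this
  have hmaps : Set.MapsTo Φ Δ Δ := by
    rintro S ⟨v, hv, rfl⟩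
    exact ⟨Matrix.vecMul v o, hne v hv, hΦO v⟩
  have e0o : Matrix.vecMul ![1, 0] o = ![0, 1] := by
    funext i
    fin_cases i <;> simp [ho_def, Matrix.vecMul, dotProduct, Fin.sum_univ_two]
  have e1o : Matrix.vecMul ![0, 1] o = ![1, 0] := by
    funext i
    fin_cases i <;> simp [ho_def, Matrix.vecMul, dotProduct, Fin.sum_univ_two]
  have hdeto : o.det = -1 := by simp [ho_def, Matrix.det_fin_two_of]
  -- key lemma: reversal of arcs
  have key : ∀ S T, Arc S T → Arc (Φ T) (Φ S) := by
    rintro S T ⟨h, h0, h1⟩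
    have hdet : (o * (h : Matrix (Fin 2) (Fin 2) F) * o).det = 1 := by
      rw [Matrix.det_mul, Matrix.det_mul, hdeto, h.property]
      ring
    refine ⟨⟨o * (h : Matrix (Fin 2) (Fin 2) F) * o, hdet⟩, ?_, ?_⟩
    · have : act ⟨o * (h : Matrix (Fin 2) (Fin 2) F) * o, hdet⟩ (O ![1, 0])
          = O (Matrix.vecMul ![1, 0] (o * (h : Matrix (Fin 2) (Fin 2) F) * o)) := hactO _ _
      rw [this, ← h1, hactO, hΦO]
      congr 1
      rw [← Matrix.vecMul_vecMul, ← Matrix.vecMul_vecMul, e0o]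
    · have : act ⟨o * (h : Matrix (Fin 2) (Fin 2) F) * o, hdet⟩ (O ![0, 1])
          = O (Matrix.vecMul ![0, 1] (o * (h : Matrix (Fin 2) (Fin 2) F) * o)) := hactO _ _
      rw [this, ← h0, hactO, hΦO]
      congr 1
      rw [← Matrix.vecMul_vecMul, ← Matrix.vecMul_vecMul, e1o]
  constructor
  · refine ⟨hmaps, ?_, ?_⟩
    · intro S _ T _ hST
      rw [← hΦΦ S, hST, hΦΦ]
    · intro S hS
      exact ⟨Φ S, hmaps hS, hΦΦ S⟩
  · intro S _ T _
    constructor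
    · exact key S T
    · intro h
      have := key _ _ h
      rwa [hΦΦ, hΦΦ] at this
end

section
/- Let q ≡ 3 (mod 4) be a prime power with q ≥ 7, and X_q the SL(2,q)-orbital digraph on Δ defined by the arc ([1,0],[0,1]). Then X_q has out-valency q and in-valency q; explicitly, the out-neighbourhood of [1,0] is {[a,1] : a ∈ F_q} and the in-neighbourhood of [0,1] is {[1,a] : a ∈ F_q}. -/
/-!
SL(2,F) is transitive on nonzero vectors, hence on Δ, and it acts by automorphisms of the
digraph, so every out-valency equals that of `[1,0]`. An element of SL(2,F) fixing `[1,0]` is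
lower triangular with diagonal `(x², x⁻²)`, so it sends `[0,1]` to `[x²c, 1]`; this gives the
out-neighbourhood `{[a,1]}`, whose members are pairwise distinct. Conjugation by the coordinate
swap preserves SL(2,F) and exchanges `[1,0]` with `[0,1]`, so the swap reverses every arc and
turns out-neighbourhoods into in-neighbourhoods.
-/

open Matrix

namespace Xq

section SquareClass

variable (F : Type*) {V W : Type*} [Field F] [AddCommGroup V] [Module F V]
  [AddCommGroup W] [Module F W]

/-- The vertex `[v]` of Δ. -/
def sqClass (v : V) : Set V := {w | ∃ x : F, x ≠ 0 ∧ x ^ 2 • v = w}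

variable {F}

lemma mem_sqClass_self (v : V) : v ∈ sqClass F v := ⟨1, one_ne_zero, by simp⟩

lemma sqClass_sq_smul {x : F} (hx : x ≠ 0) (v : V) : sqClass F (x ^ 2 • v) = sqClass F v := by
  ext w
  constructor
  · rintro ⟨y, hy, rfl⟩
    exact ⟨y * x, mul_ne_zero hy hx, by rw [smul_smul, mul_pow]⟩
  · rintro ⟨y, hy, rfl⟩
    refine ⟨y / x, div_ne_zero hy hx, ?_⟩
    rw [smul_smul, div_pow, div_mul_cancel₀ _ (pow_ne_zero 2 hx)]

lemma sqClass_eq_sqClass_iff {v w : V} : sqClass F v = sqClass F w ↔ v ∈ sqClass F w :=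
  ⟨fun h => h ▸ mem_sqClass_self v, fun ⟨_, hx, hv⟩ => hv ▸ sqClass_sq_smul hx w⟩

lemma image_sqClass {G : Type*} [FunLike G V W] [LinearMapClass G F V W] (f : G) (v : V) :
    f '' sqClass F v = sqClass F (f v) := by
  ext w
  simp [sqClass, map_smul]

end SquareClass

section Action

variable {F n : Type*} [Field F] [Fintype n] [DecidableEq n]

def slAct (g : SpecialLinearGroup n F) (S : Set (n → F)) : Set (n → F) :=
  (fun v => v ᵥ* (g : Matrix n n F)) '' S

lemma slAct_sqClass (g : SpecialLinearGroup n F) (v : n → F) :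
    slAct g (sqClass F v) = sqClass F (v ᵥ* (g : Matrix n n F)) :=
  image_sqClass (vecMulLinear (g : Matrix n n F)) v

lemma slAct_slAct (g h : SpecialLinearGroup n F) (S : Set (n → F)) :
    slAct g (slAct h S) = slAct (h * g) S := by
  simp [slAct, Set.image_image, vecMul_vecMul]

lemma slAct_inv_slAct (g : SpecialLinearGroup n F) (S : Set (n → F)) :
    slAct g⁻¹ (slAct g S) = S := by
  rw [slAct_slAct, mul_inv_cancel]
  simp [slAct]

lemma slAct_injective (g : SpecialLinearGroup n F) : Function.Injective (slAct g) :=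
  Function.LeftInverse.injective (slAct_inv_slAct g)

def permConj (e : n ≃ n) (g : SpecialLinearGroup n F) : SpecialLinearGroup n F :=
  ⟨(g : Matrix n n F).submatrix e e, by rw [det_submatrix_equiv_self]; exact g.2⟩

lemma comp_vecMul_permConj (e : n ≃ n) (g : SpecialLinearGroup n F) (v : n → F) :
    (v ∘ e) ᵥ* (permConj e g : Matrix n n F) = (v ᵥ* (g : Matrix n n F)) ∘ e := by
  simp [permConj, submatrix_vecMul_equiv, Function.comp_assoc]

end Action

section Digraph

variable {F : Type*} [Field F]

def IsArc (S T : Set (Fin 2 → F)) : Prop :=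
  ∃ h : SpecialLinearGroup (Fin 2) F,
    slAct h (sqClass F ![1, 0]) = S ∧ slAct h (sqClass F ![0, 1]) = T

def outNbhd (S : Set (Fin 2 → F)) : Set (Set (Fin 2 → F)) := {T | IsArc S T}

def inNbhd (T : Set (Fin 2 → F)) : Set (Set (Fin 2 → F)) := {S | IsArc S T}

lemma isArc_slAct {S T : Set (Fin 2 → F)} (g : SpecialLinearGroup (Fin 2) F) (hST : IsArc S T) :
    IsArc (slAct g S) (slAct g T) := by
  obtain ⟨h, rfl, rfl⟩ := hST
  exact ⟨h * g, (slAct_slAct g h _).symm, (slAct_slAct g h _).symm⟩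

lemma outNbhd_slAct (g : SpecialLinearGroup (Fin 2) F) (S : Set (Fin 2 → F)) :
    outNbhd (slAct g S) = slAct g '' outNbhd S := by
  ext T
  refine ⟨fun hT => ⟨slAct g⁻¹ T, ?_, ?_⟩, ?_⟩
  · show IsArc S _
    simpa only [slAct_inv_slAct] using isArc_slAct g⁻¹ hT
  · simpa only [inv_inv] using slAct_inv_slAct g⁻¹ T
  · rintro ⟨T, hT, rfl⟩
    exact isArc_slAct g hT

lemma exists_e₁_vecMul_eq {v : Fin 2 → F} (hv : v ≠ 0) :
    ∃ g : SpecialLinearGroup (Fin 2) F, ![1, 0] ᵥ* (g : Matrix (Fin 2) (Fin 2) F) = v := by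
  by_cases h0 : v 0 = 0
  · have h1 : v 1 ≠ 0 := fun h1 => hv (funext fun j => by fin_cases j <;> simp [h0, h1])
    refine ⟨⟨!![0, v 1; -(v 1)⁻¹, 0], by simp [det_fin_two_of, h1]⟩, ?_⟩
    ext j; fin_cases j <;> simp [h0]
  · refine ⟨⟨!![v 0, v 1; 0, (v 0)⁻¹], by simp [det_fin_two_of, h0]⟩, ?_⟩
    ext j; fin_cases j <;> simp

lemma sqClass_e₂_vecMul_of_e₁_vecMul_eq {M : Matrix (Fin 2) (Fin 2) F} (hM : M.det = 1) {x : F}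
    (hx : x ≠ 0) (h0 : ![1, 0] ᵥ* M = x ^ 2 • ![1, 0]) :
    sqClass F (![0, 1] ᵥ* M) = sqClass F ![x ^ 2 * M 1 0, 1] := by
  have h00 : M 0 0 = x ^ 2 := by simpa [vecMul, dotProduct] using congrFun h0 0
  have h01 : M 0 1 = 0 := by simpa [vecMul, dotProduct] using congrFun h0 1
  have h11 : M 1 1 = (x⁻¹) ^ 2 := by
    rw [det_fin_two, h00, h01] at hM
    field_simp
    linear_combination hM
  have hrow : ![0, 1] ᵥ* M = ![M 1 0, M 1 1] := by
    ext j; fin_cases j <;> simp [vecMul, dotProduct]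
  rw [← sqClass_sq_smul (inv_ne_zero hx) ![x ^ 2 * M 1 0, 1], hrow, h11]
  congr 1
  ext j; fin_cases j <;> simp [hx]

lemma outNbhd_sqClass_e₁ :
    outNbhd (sqClass F ![1, 0]) = Set.range fun a : F => sqClass F ![a, 1] := by
  ext T
  constructor
  · rintro ⟨h, h1, rfl⟩
    rw [slAct_sqClass, sqClass_eq_sqClass_iff] at h1
    obtain ⟨x, hx, hx1⟩ := h1
    exact ⟨_, by rw [slAct_sqClass, sqClass_e₂_vecMul_of_e₁_vecMul_eq h.2 hx hx1.symm]⟩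
  · rintro ⟨a, rfl⟩
    refine ⟨⟨!![1, 0; a, 1], by simp [det_fin_two_of]⟩,
      (slAct_sqClass _ _).trans ?_, (slAct_sqClass _ _).trans ?_⟩ <;>
      congr 1 <;> ext j <;> fin_cases j <;> simp

lemma sqClass_vecCons_one_injective : Function.Injective fun a : F => sqClass F ![a, 1] := by
  intro a b hab
  obtain ⟨x, -, hx⟩ := sqClass_eq_sqClass_iff.1 hab
  have hx1 : x ^ 2 = 1 := by simpa using congrFun hx 1
  simpa [hx1] using (congrFun hx 0).symm

lemma ncard_outNbhd_sqClass [Fintype F] {v : Fin 2 → F} (hv : v ≠ 0) :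
    (outNbhd (sqClass F v)).ncard = Fintype.card F := by
  obtain ⟨g, rfl⟩ := exists_e₁_vecMul_eq hv
  rw [← slAct_sqClass, outNbhd_slAct, Set.ncard_image_of_injective _ (slAct_injective g),
    outNbhd_sqClass_e₁, Set.ncard_range_of_injective sqClass_vecCons_one_injective,
    Nat.card_eq_fintype_card]

def swapCoords : (Fin 2 → F) ≃ₗ[F] (Fin 2 → F) :=
  LinearEquiv.funCongrLeft F F (Equiv.swap 0 1)

lemma swapCoords_apply (v : Fin 2 → F) : swapCoords v = v ∘ Equiv.swap 0 1 := rfl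

lemma swapCoords_vecCons (a b : F) : swapCoords ![a, b] = ![b, a] := by
  ext j; fin_cases j <;> rfl

lemma image_swapCoords_involutive :
    Function.Involutive fun S : Set (Fin 2 → F) => swapCoords '' S := by
  intro S
  have hv (v : Fin 2 → F) : swapCoords (swapCoords v) = v := by ext j; fin_cases j <;> rfl
  simp [Set.image_image, hv]

lemma IsArc.swap {S T : Set (Fin 2 → F)} (hST : IsArc S T) :
    IsArc (swapCoords '' T) (swapCoords '' S) := by
  obtain ⟨h, rfl, rfl⟩ := hST
  refine ⟨permConj (Equiv.swap 0 1) h, ?_, ?_⟩ <;>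
    rw [slAct_sqClass, slAct_sqClass, image_sqClass, swapCoords_apply, ← comp_vecMul_permConj] <;>
    congr 2 <;> ext j <;> fin_cases j <;> rfl

lemma inNbhd_eq_image_outNbhd (T : Set (Fin 2 → F)) :
    inNbhd T = Set.image swapCoords '' outNbhd (swapCoords '' T) := by
  have hsw := image_swapCoords_involutive (F := F)
  ext S
  constructor
  · intro hST
    exact ⟨swapCoords '' S, hST.swap, hsw S⟩
  · rintro ⟨S', hS', rfl⟩
    show IsArc _ T
    simpa only [hsw T] using hS'.swap

lemma inNbhd_sqClass_e₂ :
    inNbhd (sqClass F ![0, 1]) = Set.range fun a : F => sqClass F ![1, a] := by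
  rw [inNbhd_eq_image_outNbhd, image_sqClass, swapCoords_vecCons, outNbhd_sqClass_e₁,
    ← Set.range_comp]
  congr 1
  ext a : 1
  simp [image_sqClass, swapCoords_vecCons]

lemma ncard_inNbhd_sqClass [Fintype F] {v : Fin 2 → F} (hv : v ≠ 0) :
    (inNbhd (sqClass F v)).ncard = Fintype.card F := by
  rw [inNbhd_eq_image_outNbhd, image_sqClass,
    Set.ncard_image_of_injective _ image_swapCoords_involutive.injective,
    ncard_outNbhd_sqClass (swapCoords.map_ne_zero_iff.2 hv)]

end Digraph

end Xq

theorem Xq_valency_general (F : Type*) [Field F] [Fintype F] :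
    let O : (Fin 2 → F) → Set (Fin 2 → F) := fun v => {w | ∃ x : F, x ≠ 0 ∧ x ^ 2 • v = w}
    let Δ : Set (Set (Fin 2 → F)) := {S | ∃ v : Fin 2 → F, v ≠ 0 ∧ S = O v}
    let act : Matrix.SpecialLinearGroup (Fin 2) F → Set (Fin 2 → F) → Set (Fin 2 → F) :=
      fun g S => (fun v => Matrix.vecMul v (g : Matrix (Fin 2) (Fin 2) F)) '' S
    let Arc : Set (Fin 2 → F) → Set (Fin 2 → F) → Prop :=
      fun S T => ∃ h : Matrix.SpecialLinearGroup (Fin 2) F,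
        act h (O ![1, 0]) = S ∧ act h (O ![0, 1]) = T
    ({T | Arc (O ![1, 0]) T} = {T | ∃ a : F, T = O ![a, 1]}) ∧
    ({S | Arc S (O ![0, 1])} = {S | ∃ a : F, S = O ![1, a]}) ∧
    (∀ S ∈ Δ, Set.ncard {T | Arc S T} = Fintype.card F ∧
      Set.ncard {T | Arc T S} = Fintype.card F) := by
  intro O Δ act Arc
  refine ⟨?_, ?_, ?_⟩
  · exact Xq.outNbhd_sqClass_e₁.trans <| Set.ext fun _ => exists_congr fun _ => eq_comm
  · exact Xq.inNbhd_sqClass_e₂.trans <| Set.ext fun _ => exists_congr fun _ => eq_comm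
  · rintro S ⟨v, hv, rfl⟩
    exact ⟨Xq.ncard_outNbhd_sqClass hv, Xq.ncard_inNbhd_sqClass hv⟩

/-- For `q ≡ 3 (mod 4)`, `q ≥ 7`, the orbital digraph `X_q` has in- and out-valency `q`;
explicitly the out-neighbourhood of `[1,0]` is `{[a,1] : a ∈ F_q}` and the
in-neighbourhood of `[0,1]` is `{[1,a] : a ∈ F_q}`. -/
theorem Xq_valency (F : Type*) [Field F] [Fintype F] [DecidableEq F]
    (hq : Fintype.card F % 4 = 3) (hq7 : 7 ≤ Fintype.card F) :
    let O : (Fin 2 → F) → Set (Fin 2 → F) := fun v => {w | ∃ x : F, x ≠ 0 ∧ x ^ 2 • v = w}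
    let Δ : Set (Set (Fin 2 → F)) := {S | ∃ v : Fin 2 → F, v ≠ 0 ∧ S = O v}
    let act : Matrix.SpecialLinearGroup (Fin 2) F → Set (Fin 2 → F) → Set (Fin 2 → F) :=
      fun g S => (fun v => Matrix.vecMul v (g : Matrix (Fin 2) (Fin 2) F)) '' S
    let Arc : Set (Fin 2 → F) → Set (Fin 2 → F) → Prop :=
      fun S T => ∃ h : Matrix.SpecialLinearGroup (Fin 2) F,
        act h (O ![1, 0]) = S ∧ act h (O ![0, 1]) = T
    ({T | Arc (O ![1, 0]) T} = {T | ∃ a : F, T = O ![a, 1]}) ∧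
    ({S | Arc S (O ![0, 1])} = {S | ∃ a : F, S = O ![1, a]}) ∧
    (∀ S ∈ Δ, Set.ncard {T | Arc S T} = Fintype.card F ∧
      Set.ncard {T | Arc T S} = Fintype.card F) :=
  Xq_valency_general F
end

section
/- Let W = H ≀ Sym(2) act on Δ² in product action, where T is a transitive normal subgroup of H ≤ Sym(Δ), and let G ≤ W contain N = T × T with G transitive on the two coordinate factors. Fix (ε₁, ε₂) ∈ Δ², let G₁ be the subgroup of G preserving the first coordinate, and let π₁ : G₁ → H be the first-coordinate projection. If π₁(G₁) = H, then π₁(G₁ ∩ G_{(ε₁,ε₂)}) = H_{ε₁}. -/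
/-- The reindexing action of `Sym(2)` on `Fin 2 → Sym(Δ)`, used to build the wreath
product `Sym(Δ) ≀ Sym(2)`. -/
def wreathPhi (Δ : Type*) : Equiv.Perm (Fin 2) →* MulAut (Fin 2 → Equiv.Perm Δ) where
  toFun σ :=
    { toFun := fun f i => f (σ⁻¹ i)
      invFun := fun f i => f (σ i)
      left_inv := by intro f; funext i; simp
      right_inv := by intro f; funext i; simp
      map_mul' := fun f g => rfl }
  map_one' := by ext f i; simp
  map_mul' := by intro σ τ; ext f i; simp [mul_inv_rev]

/-- The wreath product `H ≀ Sym(2)` as a semidirect product acting on `Δ²` in product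
action, with `g = ⟨f, σ⟩` sending `v` to `i ↦ f i (v (σ⁻¹ i))`. -/
abbrev Wreath2 (Δ : Type*) :=
  SemidirectProduct (Fin 2 → Equiv.Perm Δ) (Equiv.Perm (Fin 2)) (wreathPhi Δ)

/-!
Given `h ∈ H` fixing `ε₁`, lift it to a base element `g ∈ G` with first coordinate `h`.
Its second coordinate moves `ε₂` somewhere, but since `N = T × T ≤ G` and `T` is transitive,
multiplying by `(1, t)` for a suitable `t ∈ T` repairs the second coordinate without touching the
first; this is the factorisation `G = N · G_{(ε₁,ε₂)}`. The converse inclusion is immediate.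
-/

open SemidirectProduct

namespace Wreath2

variable {Δ : Type*}

lemma fixes_iff_of_right_eq_one {g : Wreath2 Δ} (hg : g.right = 1) (v : Fin 2 → Δ) :
    (∀ i, g.left i (v (g.right⁻¹ i)) = v i) ↔ ∀ i, g.left i (v i) = v i := by
  simp [hg]

lemma exists_mem_left_zero_eq_and_fixes {T : Subgroup (Equiv.Perm Δ)}
    (hTtrans : ∀ a b : Δ, ∃ t ∈ T, t a = b) {G : Subgroup (Wreath2 Δ)}
    (hNG : ∀ f : Fin 2 → Equiv.Perm Δ, (∀ i, f i ∈ T) → (⟨f, 1⟩ : Wreath2 Δ) ∈ G)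
    {g : Wreath2 Δ} (hgG : g ∈ G) (hg : g.right = 1) {v : Fin 2 → Δ}
    (hv₀ : g.left 0 (v 0) = v 0) :
    ∃ g' ∈ G, g'.right = 1 ∧ g'.left 0 = g.left 0 ∧ ∀ i, g'.left i (v i) = v i := by
  obtain ⟨t, htT, ht⟩ := hTtrans (g.left 1 (v 1)) (v 1)
  have hcorr : ∀ i, (Pi.mulSingle 1 t : Fin 2 → Equiv.Perm Δ) i ∈ T := fun i => by
    fin_cases i <;> simp [htT]
  refine ⟨inl (Pi.mulSingle 1 t) * g, mul_mem (hNG _ hcorr) hgG, by simp [hg], by simp, ?_⟩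
  intro i
  fin_cases i <;> simp [hv₀, ht]

end Wreath2

open Wreath2

theorem projection_of_point_stabilizer_general {Δ : Type*}
    (H T : Subgroup (Equiv.Perm Δ))
    (hTtrans : ∀ a b : Δ, ∃ t ∈ T, t a = b)
    (G : Subgroup (Wreath2 Δ))
    (hGW : ∀ g ∈ G, ∀ i : Fin 2, SemidirectProduct.left g i ∈ H)
    (hNG : ∀ f : Fin 2 → Equiv.Perm Δ, (∀ i, f i ∈ T) → (⟨f, 1⟩ : Wreath2 Δ) ∈ G)
    (hsurj : ∀ h ∈ H, ∃ g ∈ G, SemidirectProduct.right g = 1 ∧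
      SemidirectProduct.left g 0 = h)
    (ε₁ ε₂ : Δ) :
    ∀ h : Equiv.Perm Δ,
      (∃ g ∈ G, SemidirectProduct.right g = 1 ∧ SemidirectProduct.left g 0 = h ∧
        ∀ i : Fin 2,
          SemidirectProduct.left g i (![ε₁, ε₂] ((SemidirectProduct.right g)⁻¹ i)) =
            ![ε₁, ε₂] i) ↔
      (h ∈ H ∧ h ε₁ = ε₁) := by
  intro h
  constructor
  · rintro ⟨g, hgG, hg, rfl, hfix⟩
    rw [fixes_iff_of_right_eq_one hg] at hfix
    exact ⟨hGW g hgG 0, hfix 0⟩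
  · rintro ⟨hH, hε₁⟩
    obtain ⟨g, hgG, hg, rfl⟩ := hsurj h hH
    obtain ⟨g', hg'G, hg', hg'0, hfix⟩ :=
      exists_mem_left_zero_eq_and_fixes hTtrans hNG hgG hg (v := ![ε₁, ε₂]) hε₁
    exact ⟨g', hg'G, hg', hg'0, (fixes_iff_of_right_eq_one hg' _).2 hfix⟩

/-- Lemma `Psfavourite` (`n = 2` case): with `N = T × T ≤ G ≤ H ≀ Sym(2)` of product
action type and `π₁(G₁) = H`, one has `π₁(G₁ ∩ G_{(ε₁,ε₂)}) = H_{ε₁}`. -/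
theorem projection_of_point_stabilizer {Δ : Type*}
    (H T : Subgroup (Equiv.Perm Δ)) (hTH : T ≤ H)
    (hTnormal : ∀ h ∈ H, ∀ t ∈ T, h * t * h⁻¹ ∈ T)
    (hTtrans : ∀ a b : Δ, ∃ t ∈ T, t a = b)
    (G : Subgroup (Wreath2 Δ))
    (hGW : ∀ g ∈ G, ∀ i : Fin 2, SemidirectProduct.left g i ∈ H)
    (hNG : ∀ f : Fin 2 → Equiv.Perm Δ, (∀ i, f i ∈ T) → (⟨f, 1⟩ : Wreath2 Δ) ∈ G)
    (hGcoord : ∃ g ∈ G, SemidirectProduct.right g 0 = 1)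
    (hsurj : ∀ h ∈ H, ∃ g ∈ G, SemidirectProduct.right g = 1 ∧
      SemidirectProduct.left g 0 = h)
    (ε₁ ε₂ : Δ) :
    ∀ h : Equiv.Perm Δ,
      (∃ g ∈ G, SemidirectProduct.right g = 1 ∧ SemidirectProduct.left g 0 = h ∧
        ∀ i : Fin 2,
          SemidirectProduct.left g i (![ε₁, ε₂] ((SemidirectProduct.right g)⁻¹ i)) =
            ![ε₁, ε₂] i) ↔
      (h ∈ H ∧ h ε₁ = ε₁) :=
  projection_of_point_stabilizer_general H T hTtrans G hGW hNG hsurj ε₁ ε₂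
end
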